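/- Emptiness propagates backwards along subtyping: if t₁ ≤ t₂ (syntactic positive subtyping) and t₂ empty, then t₁ empty. -/

import Mathlib

namespace CBPV

abbrev Label := String
abbrev Var := String

-- Positive types (values); `name` refers to an equirecursively defined type name.
mutual
inductive PosTp : Type where
  | name : String → PosTp
  | str  : PosStr → PosTp

/-- Structural positive types. -/
inductive PosStr : Type where
  | tensor : PosTp → PosTp → PosStr
  | one    : PosStr
  | plus   : List (Label × PosTp) → PosStr
  | down   : NegTp → PosStr

/-- Negative types (computations). -/
inductive NegTp : Type where
  | name : String → NegTp
  | str  : NegStr → NegTp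

/-- Structural negative types. -/
inductive NegStr : Type where
  | arrow   : PosTp → NegTp → NegStr
  | withRec : List (Label × NegTp) → NegStr
  | up      : PosTp → NegStr
end

mutual
/-- Values. -/
inductive Val : Type where
  | var   : Var → Val
  | pair  : Val → Val → Val
  | unit  : Val
  | inj   : Label → Val → Val
  | thunk : Comp → Val

/-- Computations. -/
inductive Comp : Type where
  | lam       : Var → Comp → Comp
  | app       : Comp → Val → Comp
  | record    : List (Label × Comp) → Comp
  | proj      : Comp → Label → Comp
  | ret       : Val → Comp
  | letret    : Var → Comp → Comp → Comp
  | name      : String → Comp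
  | matchPair : Val → Var → Var → Comp → Comp
  | matchUnit : Val → Comp → Comp
  | matchSum  : Val → List (Label × Var × Comp) → Comp
  | force     : Val → Comp
end

/-- A global signature: equirecursive (contractive) type definitions `t = τ⁺`,
`s = σ⁻`, and recursive expression definitions `f : σ⁻ = e`. -/
structure Signature : Type where
  pos  : String → PosStr
  neg  : String → NegStr
  defs : String → NegTp × Comp

mutual
/-- Substitution of value `w` for variable `x` in a value. -/
def substV (w : Val) (x : Var) : Val → Val
  | .var y => if y = x then w else .var y
  | .pair v₁ v₂ => .pair (substV w x v₁) (substV w x v₂)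
  | .unit => .unit
  | .inj j v => .inj j (substV w x v)
  | .thunk e => .thunk (substC w x e)

/-- Substitution of value `w` for variable `x` in a computation. -/
def substC (w : Val) (x : Var) : Comp → Comp
  | .lam y e => .lam y (if y = x then e else substC w x e)
  | .app e v => .app (substC w x e) (substV w x v)
  | .record L => .record (substRec w x L)
  | .proj e j => .proj (substC w x e) j
  | .ret v => .ret (substV w x v)
  | .letret y e₁ e₂ => .letret y (substC w x e₁) (if y = x then e₂ else substC w x e₂)
  | .name f => .name f
  | .matchPair v y z e =>
      .matchPair (substV w x v) y z (if y = x ∨ z = x then e else substC w x e)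
  | .matchUnit v e => .matchUnit (substV w x v) (substC w x e)
  | .matchSum v B => .matchSum (substV w x v) (substBr w x B)
  | .force v => .force (substV w x v)

def substRec (w : Val) (x : Var) : List (Label × Comp) → List (Label × Comp)
  | [] => []
  | (l, e) :: rest => (l, substC w x e) :: substRec w x rest

def substBr (w : Val) (x : Var) : List (Label × Var × Comp) → List (Label × Var × Comp)
  | [] => []
  | (l, y, e) :: rest =>
      (l, y, if y = x then e else substC w x e) :: substBr w x rest
end

/-- Terminal computations. -/
inductive Terminal : Comp → Prop where
  | lam    : Terminal (.lam x e)
  | record : Terminal (.record L)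
  | ret    : Terminal (.ret v)

/-- Small-step dynamics of call-by-push-value, relative to a signature. -/
inductive Step (Sg : Signature) : Comp → Comp → Prop where
  | beta       : Step Sg (.app (.lam x e) v) (substC v x e)
  | app        : Step Sg e e' → Step Sg (.app e v) (.app e' v)
  | letretBeta : Step Sg (.letret x (.ret v) e₂) (substC v x e₂)
  | letretStep : Step Sg e₁ e₁' → Step Sg (.letret x e₁ e₂) (.letret x e₁' e₂)
  | projBeta   : L.lookup j = some e → Step Sg (.proj (.record L) j) e
  | projStep   : Step Sg e e' → Step Sg (.proj e j) (.proj e' j)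
  | matchPair  : Step Sg (.matchPair (.pair v₁ v₂) x y e) (substC v₁ x (substC v₂ y e))
  | matchUnit  : Step Sg (.matchUnit .unit e) e
  | matchSum   : B.lookup j = some (x, ej) → Step Sg (.matchSum (.inj j v) B) (substC v x ej)
  | force      : Step Sg (.force (.thunk e)) e
  | name       : Sg.defs f = (σ, e) → Step Sg (.name f) e

end CBPV

namespace CBPV

def PosTp.IsName : PosTp → Prop := fun τ => ∃ t, τ = .name t
def NegTp.IsName : NegTp → Prop := fun σ => ∃ s, σ = .name s

/-- A structural positive type is in normal form if all of its components are
type names, and its label lists have no duplicate labels. -/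
def PosStrNormal : PosStr → Prop
  | .tensor τ₁ τ₂ => τ₁.IsName ∧ τ₂.IsName
  | .one => True
  | .plus L => (∀ p ∈ L, (Prod.snd p).IsName) ∧ (L.map Prod.fst).Nodup
  | .down σ => σ.IsName

def NegStrNormal : NegStr → Prop
  | .arrow τ σ => τ.IsName ∧ σ.IsName
  | .withRec L => (∀ p ∈ L, (Prod.snd p).IsName) ∧ (L.map Prod.fst).Nodup
  | .up τ => τ.IsName

/-- A signature is in normal form when every type definition alternates between
type names and structural types, i.e. the components of every defined
structural type are themselves type names. -/
def SigNormal (Sg : Signature) : Prop :=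
  (∀ t, PosStrNormal (Sg.pos t)) ∧ (∀ s, NegStrNormal (Sg.neg s))

/-- One unfolding of the rules for the emptiness judgment `t empty`. -/
def EmptyUnf (Sg : Signature) (S : String → Prop) (t : String) : Prop :=
  (∃ L, Sg.pos t = .plus L ∧
     ∀ p ∈ L, ∃ tj, Prod.snd p = PosTp.name tj ∧ S tj) ∨
  (∃ t₁ t₂, Sg.pos t = .tensor (.name t₁) (.name t₂) ∧ (S t₁ ∨ S t₂))

/-- `t empty`: the greatest fixed point (circular derivations) of the
emptiness rules. -/
def TpEmpty (Sg : Signature) (t : String) : Prop :=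
  ∃ S : String → Prop, (∀ u, S u → EmptyUnf Sg S u) ∧ S t

/-- `s full`: `s = t₁ → s₂ ∈ Σ` with `t₁ empty`, or `s = &{} ∈ Σ`. -/
def TpFull (Sg : Signature) (s : String) : Prop :=
  (∃ t₁ s₂, Sg.neg s = .arrow (.name t₁) (.name s₂) ∧ TpEmpty Sg t₁) ∨
  Sg.neg s = .withRec []

/-- One unfolding of the rules for positive subtyping `t ≤ u` between
positive type names. -/
def PosSubUnf (Sg : Signature) (P N : String → String → Prop) (t u : String) : Prop :=
  (∃ t₁ t₂ u₁ u₂, Sg.pos t = .tensor (.name t₁) (.name t₂) ∧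
     Sg.pos u = .tensor (.name u₁) (.name u₂) ∧ P t₁ u₁ ∧ P t₂ u₂) ∨
  (Sg.pos t = .one ∧ Sg.pos u = .one) ∨
  (∃ L K, Sg.pos t = .plus L ∧ Sg.pos u = .plus K ∧
     ∀ p ∈ L, ∃ tj, Prod.snd p = PosTp.name tj ∧
       (TpEmpty Sg tj ∨ ∃ uj, K.lookup (Prod.fst p) = some (PosTp.name uj) ∧ P tj uj)) ∨
  (∃ s r, Sg.pos t = .down (.name s) ∧ Sg.pos u = .down (.name r) ∧ N s r) ∨
  TpEmpty Sg t

/-- One unfolding of the rules for negative subtyping `s ≤ r` between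
negative type names. -/
def NegSubUnf (Sg : Signature) (P N : String → String → Prop) (s r : String) : Prop :=
  (∃ t₁ s₂ u₁ r₂, Sg.neg s = .arrow (.name t₁) (.name s₂) ∧
     Sg.neg r = .arrow (.name u₁) (.name r₂) ∧ P u₁ t₁ ∧ N s₂ r₂) ∨
  (∃ t u, Sg.neg s = .up (.name t) ∧ Sg.neg r = .up (.name u) ∧ P t u) ∨
  (∃ L K, Sg.neg s = .withRec L ∧ Sg.neg r = .withRec K ∧
     ∀ p ∈ K, ∃ rj, Prod.snd p = NegTp.name rj ∧
       ∃ sj, L.lookup (Prod.fst p) = some (NegTp.name sj) ∧ N sj rj) ∨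
  (∃ t, Sg.neg s = .up (.name t) ∧ TpEmpty Sg t) ∨
  TpFull Sg r

/-- `t ≤ u`: syntactic subtyping between positive type names, interpreted as
circular derivations (greatest fixed point of the subtyping rules). -/
def PosSub (Sg : Signature) (t u : String) : Prop :=
  ∃ P N : String → String → Prop,
    (∀ a b, P a b → PosSubUnf Sg P N a b) ∧
    (∀ a b, N a b → NegSubUnf Sg P N a b) ∧ P t u

/-- `s ≤ r`: syntactic subtyping between negative type names, interpreted as
circular derivations (greatest fixed point of the subtyping rules). -/
def NegSub (Sg : Signature) (s r : String) : Prop :=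
  ∃ P N : String → String → Prop,
    (∀ a b, P a b → PosSubUnf Sg P N a b) ∧
    (∀ a b, N a b → NegSubUnf Sg P N a b) ∧ N s r

end CBPV

/-! By coinduction. Given a relation `P` witnessing `t₁ ≤ t₂`, the set of types that are
empty or `P`-below an empty type is closed under the emptiness rules: an empty supertype is
a sum or a product, so the subtyping rule relating it to its subtype is the matching
congruence rule (or the subtype is already empty), and the components of the subtype are
then empty or `P`-below the empty components of the supertype. -/

namespace CBPV

theorem mem_of_lookup_eq_some {α β : Type*} [BEq α] [LawfulBEq α] {l : List (α × β)} {a : α}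
    {b : β} (h : l.lookup a = some b) : (a, b) ∈ l := by
  induction l with
  | nil => simp [List.lookup] at h
  | cons p l ih =>
    obtain ⟨c, d⟩ := p
    by_cases hac : a = c
    · subst hac
      simp_all [List.lookup]
    · simp_all [List.lookup, beq_false_of_ne hac]

section Emptiness

variable {Sg : Signature} {S S' : String → Prop} {t : String}

theorem EmptyUnf.mono (h : ∀ x, S x → S' x) (hu : EmptyUnf Sg S t) : EmptyUnf Sg S' t := by
  rcases hu with ⟨L, hL, hall⟩ | ⟨t₁, t₂, ht, hor⟩
  · exact Or.inl ⟨L, hL, fun p hp => (hall p hp).imp fun _ ⟨hp, hS⟩ => ⟨hp, h _ hS⟩⟩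
  · exact Or.inr ⟨t₁, t₂, ht, hor.imp (h _) (h _)⟩

theorem TpEmpty.unfold (h : TpEmpty Sg t) : EmptyUnf Sg (TpEmpty Sg) t := by
  obtain ⟨S, hS, hSt⟩ := h
  exact (hS t hSt).mono fun x hx => ⟨S, hS, hx⟩

theorem emptyUnf_iff_of_tensor {t₁ t₂ : String} (ht : Sg.pos t = .tensor (.name t₁) (.name t₂)) :
    EmptyUnf Sg S t ↔ S t₁ ∨ S t₂ := by
  simp [EmptyUnf, ht]

theorem emptyUnf_iff_of_plus {L : List (Label × PosTp)} (ht : Sg.pos t = .plus L) :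
    EmptyUnf Sg S t ↔ ∀ p ∈ L, ∃ tj, p.2 = .name tj ∧ S tj := by
  simp [EmptyUnf, ht]

theorem not_emptyUnf_of_one (ht : Sg.pos t = .one) : ¬EmptyUnf Sg S t := by
  simp [EmptyUnf, ht]

theorem not_emptyUnf_of_down {s : String} (ht : Sg.pos t = .down (.name s)) :
    ¬EmptyUnf Sg S t := by
  simp [EmptyUnf, ht]

end Emptiness

section Subtyping

variable {Sg : Signature} {P N : String → String → Prop}

def EmptyOrBelowEmpty (Sg : Signature) (P : String → String → Prop) (a : String) : Prop :=
  TpEmpty Sg a ∨ ∃ b, P a b ∧ TpEmpty Sg b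

theorem PosSubUnf.emptyUnf {a b : String} (h : PosSubUnf Sg P N a b)
    (hb : EmptyUnf Sg (TpEmpty Sg) b) : EmptyUnf Sg (EmptyOrBelowEmpty Sg P) a := by
  rcases h with ⟨a₁, a₂, b₁, b₂, ha, hb', h₁, h₂⟩ | ⟨-, hb'⟩ | ⟨L, K, ha, hb', hLK⟩ |
      ⟨s, r, -, hb', -⟩ | ha
  · rw [emptyUnf_iff_of_tensor hb'] at hb
    rw [emptyUnf_iff_of_tensor ha]
    exact hb.imp (fun h => Or.inr ⟨b₁, h₁, h⟩) (fun h => Or.inr ⟨b₂, h₂, h⟩)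
  · exact absurd hb (not_emptyUnf_of_one hb')
  · rw [emptyUnf_iff_of_plus hb'] at hb
    rw [emptyUnf_iff_of_plus ha]
    intro p hp
    obtain ⟨tj, htj, hcase⟩ := hLK p hp
    refine ⟨tj, htj, hcase.imp id ?_⟩
    rintro ⟨uj, hlookup, hP⟩
    obtain ⟨_, ⟨⟩, huj⟩ := hb _ (mem_of_lookup_eq_some hlookup)
    exact ⟨uj, hP, huj⟩
  · exact absurd hb (not_emptyUnf_of_down hb')
  · exact ha.unfold.mono fun _ => Or.inl

theorem emptyOrBelowEmpty_postfixed (hP : ∀ a b, P a b → PosSubUnf Sg P N a b) (a : String)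
    (ha : EmptyOrBelowEmpty Sg P a) : EmptyUnf Sg (EmptyOrBelowEmpty Sg P) a := by
  rcases ha with ha | ⟨b, hab, hb⟩
  · exact ha.unfold.mono fun _ => Or.inl
  · exact (hP a b hab).emptyUnf hb.unfold

end Subtyping

/-- Emptiness propagates backwards along subtyping: if `t₁ ≤ t₂` (syntactic
positive subtyping) and `t₂ empty`, then `t₁ empty`. -/
theorem empty_of_sub_empty (Sg : Signature) (hN : SigNormal Sg)
    (t₁ t₂ : String) (hsub : PosSub Sg t₁ t₂) (hemp : TpEmpty Sg t₂) :
    TpEmpty Sg t₁ := by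
  obtain ⟨P, N, hP, -, ht⟩ := hsub
  exact ⟨EmptyOrBelowEmpty Sg P, emptyOrBelowEmpty_postfixed hP, Or.inr ⟨t₂, ht, hemp⟩⟩

end CBPV
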